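/- arXiv:1308.3155 — 2 statements merged into one kernel-verified Lean document; each statement's English description precedes it below -/
import Mathlib

section
/- Let D(a) = A(a)·B(a)·C(a) where A, B, C are {0,1}-valued. If for all n, P(∩_{i=1}^n {A(a_i)=0}) ≤ p_1^n, P(∩_{i=1}^n {B(a_i)=0}) ≤ p_2^n, and P(∩_{i=1}^n {C(a_i)=0}) ≤ p_3^n, then P(∩_{i=1}^n {D(a_i)=0}) ≤ (√p_1 + p_2^{1/4} + p_3^{1/4})^n. -/
/-!
Each point of `⋂ᵢ {D(aᵢ) = 0}` lies in `⋂ᵢ {F_{f(i)}(aᵢ) = 0}` for some choice `f : Fin n → {A, B, C}`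
of a failing factor at every edge. For a fixed `f`, with `kⱼ` edges assigned to factor `j`, the
hypotheses bound that event by `p₁^{k₁}`, `p₂^{k₂}` and `p₃^{k₃}` simultaneously, hence by the
weighted geometric mean `(p₁^{k₁})^{1/2} (p₂^{k₂})^{1/4} (p₃^{k₃})^{1/4}`. Summing over the `3ⁿ`
choices of `f` and expanding the `n`-th power gives `(√p₁ + p₂^{1/4} + p₃^{1/4})ⁿ`.
-/

open MeasureTheory Finset
open scoped ENNReal

namespace ENNReal

theorem rpow_sum_of_nonneg {κ : Type*} (x : ℝ≥0∞) {s : Finset κ} {w : κ → ℝ}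
    (hw : ∀ j ∈ s, 0 ≤ w j) : x ^ (∑ j ∈ s, w j) = ∏ j ∈ s, x ^ w j := by
  induction s using Finset.cons_induction with
  | empty => simp
  | cons j s _ ih =>
    rw [sum_cons, prod_cons, rpow_add_of_nonneg _ _ (hw j (mem_cons_self j s))
      (sum_nonneg fun i hi => hw i (mem_cons_of_mem hi)),
      ih fun i hi => hw i (mem_cons_of_mem hi)]

theorem le_prod_rpow_of_le {κ : Type*} [Fintype κ] {x : ℝ≥0∞} {b : κ → ℝ≥0∞} {w : κ → ℝ}
    (hw₀ : ∀ j, 0 ≤ w j) (hw₁ : ∑ j, w j = 1) (hb : ∀ j, x ≤ b j) :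
    x ≤ ∏ j, b j ^ w j :=
  calc x = x ^ (∑ j, w j) := by rw [hw₁, rpow_one]
    _ = ∏ j, x ^ w j := rpow_sum_of_nonneg x fun j _ => hw₀ j
    _ ≤ ∏ j, b j ^ w j := prod_le_prod' fun j _ => rpow_le_rpow (hb j) (hw₀ j)

end ENNReal

section FailureBounds

variable {Ω ι : Type*} [MeasurableSpace Ω] (P : Measure Ω)

theorem measure_biInter_le_pow_card {E : ι → Set Ω} {p : ℝ≥0∞}
    (hE : ∀ (n : ℕ) (a : Fin n → ι), Function.Injective a → P (⋂ i, E (a i)) ≤ p ^ n)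
    {n : ℕ} {a : Fin n → ι} (ha : Function.Injective a) (s : Finset (Fin n)) :
    P (⋂ i ∈ s, E (a i)) ≤ p ^ #s := by
  rw [← set_biInter_coe, ← range_orderEmbOfFin s rfl, Set.biInter_range]
  exact hE _ _ (ha.comp (s.orderEmbOfFin rfl).injective)

variable {κ : Type*} [Fintype κ] {E : κ → ι → Set Ω} {p : κ → ℝ≥0∞} {w : κ → ℝ}

theorem measure_iInter_le_prod_rpow (hw₀ : ∀ j, 0 ≤ w j) (hw₁ : ∑ j, w j = 1)
    (hE : ∀ j (n : ℕ) (a : Fin n → ι), Function.Injective a → P (⋂ i, E j (a i)) ≤ p j ^ n)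
    {n : ℕ} {a : Fin n → ι} (ha : Function.Injective a) (f : Fin n → κ) :
    P (⋂ i, E (f i) (a i)) ≤ ∏ i, p (f i) ^ w (f i) := by
  classical
  have hfiber : ∀ j, P (⋂ i, E (f i) (a i)) ≤ p j ^ #{i | f i = j} := fun j =>
    (measure_mono fun ω hω => Set.mem_iInter₂.2 fun i hi =>
      (mem_filter.1 hi).2 ▸ Set.mem_iInter.1 hω i).trans (measure_biInter_le_pow_card P (hE j) ha _)
  calc P (⋂ i, E (f i) (a i)) ≤ ∏ j, (p j ^ #{i | f i = j}) ^ w j :=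
        ENNReal.le_prod_rpow_of_le hw₀ hw₁ hfiber
    _ = ∏ j, (p j ^ w j) ^ #{i | f i = j} := by
        simp_rw [← ENNReal.rpow_natCast_mul, mul_comm, ENNReal.rpow_mul_natCast]
    _ = ∏ i, p (f i) ^ w (f i) := by
        simp_rw [← prod_const, prod_fiberwise' univ f fun j => p j ^ w j]

theorem measure_iInter_iUnion_le_pow (hw₀ : ∀ j, 0 ≤ w j) (hw₁ : ∑ j, w j = 1)
    (hE : ∀ j (n : ℕ) (a : Fin n → ι), Function.Injective a → P (⋂ i, E j (a i)) ≤ p j ^ n)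
    {n : ℕ} {a : Fin n → ι} (ha : Function.Injective a) :
    P (⋂ i, ⋃ j, E j (a i)) ≤ (∑ j, p j ^ w j) ^ n :=
  calc P (⋂ i, ⋃ j, E j (a i)) = P (⋃ f : Fin n → κ, ⋂ i, E (f i) (a i)) :=
        congrArg P iInf_iSup_eq
    _ ≤ ∑ f : Fin n → κ, P (⋂ i, E (f i) (a i)) := measure_iUnion_fintype_le P _
    _ ≤ ∑ f : Fin n → κ, ∏ i, p (f i) ^ w (f i) :=
        sum_le_sum fun f _ => measure_iInter_le_prod_rpow P hw₀ hw₁ hE ha f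
    _ = (∑ j, p j ^ w j) ^ n := (Fintype.sum_pow (fun j => p j ^ w j) n).symm

end FailureBounds

theorem stmt_4_general {Ω ι : Type*} [MeasurableSpace Ω] (P : Measure Ω)
    (A B C D : ι → Ω → ℕ)
    (hD : ∀ a ω, D a ω = A a ω * B a ω * C a ω)
    (p₁ p₂ p₃ : ℝ≥0∞)
    (hpA : ∀ (n : ℕ) (a : Fin n → ι), Function.Injective a →
      P (⋂ i, {ω | A (a i) ω = 0}) ≤ p₁ ^ n)
    (hpB : ∀ (n : ℕ) (a : Fin n → ι), Function.Injective a →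
      P (⋂ i, {ω | B (a i) ω = 0}) ≤ p₂ ^ n)
    (hpC : ∀ (n : ℕ) (a : Fin n → ι), Function.Injective a →
      P (⋂ i, {ω | C (a i) ω = 0}) ≤ p₃ ^ n) :
    ∀ (n : ℕ) (a : Fin n → ι), Function.Injective a →
      P (⋂ i, {ω | D (a i) ω = 0}) ≤
        (p₁ ^ ((1 : ℝ) / 2) + p₂ ^ ((1 : ℝ) / 4) + p₃ ^ ((1 : ℝ) / 4)) ^ n := by
  intro n a ha
  let E : Fin 3 → ι → Set Ω :=
    ![fun b => {ω | A b ω = 0}, fun b => {ω | B b ω = 0}, fun b => {ω | C b ω = 0}]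
  have hD_zero : ∀ b, {ω | D b ω = 0} = ⋃ j, E j b := by
    intro b; ext ω
    simp [E, Fin.exists_fin_succ, hD, or_assoc]
  have hE : ∀ j (n : ℕ) (a : Fin n → ι), Function.Injective a →
      P (⋂ i, E j (a i)) ≤ ![p₁, p₂, p₃] j ^ n := by
    simpa [Fin.forall_fin_succ, E] using ⟨hpA, hpB, hpC⟩
  have hw₀ : ∀ j, 0 ≤ ![(1 : ℝ) / 2, 1 / 4, 1 / 4] j := by simp [Fin.forall_fin_succ]
  have hw₁ : ∑ j, ![(1 : ℝ) / 2, 1 / 4, 1 / 4] j = 1 := by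
    norm_num [Fin.sum_univ_succ]
  simp_rw [hD_zero]
  simpa [Fin.sum_univ_three, add_assoc] using measure_iInter_iUnion_le_pow P hw₀ hw₁ hE ha

/-- Proposition 3 of Dousse et al.: if `D = A·B·C` with `A,B,C` `{0,1}`-valued and
the probability of `n` distinct failures of `A` (resp. `B`, `C`) is at most
`p₁ⁿ` (resp. `p₂ⁿ`, `p₃ⁿ`), then the probability of `n` distinct failures of `D`
is at most `(√p₁ + p₂^{1/4} + p₃^{1/4})ⁿ`. -/
theorem stmt_4 {Ω ι : Type*} [MeasurableSpace Ω] (P : Measure Ω) [IsProbabilityMeasure P]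
    (A B C D : ι → Ω → ℕ)
    (hA01 : ∀ a ω, A a ω = 0 ∨ A a ω = 1) (hB01 : ∀ a ω, B a ω = 0 ∨ B a ω = 1)
    (hC01 : ∀ a ω, C a ω = 0 ∨ C a ω = 1)
    (hD : ∀ a ω, D a ω = A a ω * B a ω * C a ω)
    (p₁ p₂ p₃ : ℝ≥0∞)
    (hpA : ∀ (n : ℕ) (a : Fin n → ι), Function.Injective a →
      P (⋂ i, {ω | A (a i) ω = 0}) ≤ p₁ ^ n)
    (hpB : ∀ (n : ℕ) (a : Fin n → ι), Function.Injective a →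
      P (⋂ i, {ω | B (a i) ω = 0}) ≤ p₂ ^ n)
    (hpC : ∀ (n : ℕ) (a : Fin n → ι), Function.Injective a →
      P (⋂ i, {ω | C (a i) ω = 0}) ≤ p₃ ^ n) :
    ∀ (n : ℕ) (a : Fin n → ι), Function.Injective a →
      P (⋂ i, {ω | D (a i) ω = 0}) ≤
        (p₁ ^ ((1 : ℝ) / 2) + p₂ ^ ((1 : ℝ) / 4) + p₃ ^ ((1 : ℝ) / 4)) ^ n :=
  stmt_4_general P A B C D hD p₁ p₂ p₃ hpA hpB hpC
end

section
/- Let B_N be the square [−N/2, N/2]² and suppose G_E and G_L are two planar graphs (edge sets of segments in ℝ²) such that no edge of G_L crosses any edge of G_E. If G_E contains both a left-to-right crossing and a top-to-bottom crossing of B_N, then G_L cannot contain both a left-to-right crossing and a top-to-bottom crossing of B_N. -/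
/-! If `G_E`'s left-to-right crossing and `G_L`'s top-to-bottom crossing are traversed by paths
`γ₁` and `γ₂`, the difference `F (s, t) = γ₁ s - γ₂ t` satisfies the sign conditions of the
two-dimensional Poincaré–Miranda theorem on the unit square, so the two paths meet, which the
disjointness of the edges forbids. Poincaré–Miranda is proved by a discrete winding argument:
if `F` has no zero, sample it on a grid so fine that neighbouring values differ by less than
`min ‖F‖`, hence turn by an angle in `(-π/2, π/2)`. Around each grid cell the four angle
increments then sum to exactly `0`, hence so do those around the boundary of the square; but the
sign conditions keep each side in a half-plane, and the four corners force a total of `2π`. -/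

/-- The box `B_N = [-N/2, N/2]²`. -/
def boxN (N : ℝ) : Set (ℝ × ℝ) :=
  Set.Icc (-(N / 2)) (N / 2) ×ˢ Set.Icc (-(N / 2)) (N / 2)

/-- `G` (a set of plane segments given by their endpoint pairs) contains a
left-to-right crossing of the box `B_N`: a polygonal path of edges of `G`, lying
in the box, from the left side to the right side. -/
def HasLRCrossing (G : Set ((ℝ × ℝ) × (ℝ × ℝ))) (N : ℝ) : Prop :=
  ∃ (k : ℕ) (v : Fin (k + 1) → ℝ × ℝ),
    (∀ i : Fin k, (v i.castSucc, v i.succ) ∈ G ∨ (v i.succ, v i.castSucc) ∈ G) ∧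
    (∀ i : Fin k, segment ℝ (v i.castSucc) (v i.succ) ⊆ boxN N) ∧
    (v 0).1 = -(N / 2) ∧ (v (Fin.last k)).1 = N / 2 ∧ v 0 ∈ boxN N ∧ v (Fin.last k) ∈ boxN N

/-- Top-to-bottom crossing of the box `B_N`. -/
def HasTBCrossing (G : Set ((ℝ × ℝ) × (ℝ × ℝ))) (N : ℝ) : Prop :=
  ∃ (k : ℕ) (v : Fin (k + 1) → ℝ × ℝ),
    (∀ i : Fin k, (v i.castSucc, v i.succ) ∈ G ∨ (v i.succ, v i.castSucc) ∈ G) ∧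
    (∀ i : Fin k, segment ℝ (v i.castSucc) (v i.succ) ⊆ boxN N) ∧
    (v 0).2 = N / 2 ∧ (v (Fin.last k)).2 = -(N / 2) ∧ v 0 ∈ boxN N ∧ v (Fin.last k) ∈ boxN N

open Complex Real Set Finset

namespace Complex

lemma arg_mul_of_re_nonneg {x y : ℂ} (hx : x ≠ 0) (hx' : 0 ≤ x.re) (hy : 0 < y.re) :
    arg (x * y) = arg x + arg y := by
  have hy0 : y ≠ 0 := by rintro rfl; simp at hy
  have h₁ := abs_le.1 (abs_arg_le_pi_div_two_iff.2 hx')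
  have h₂ := abs_lt.1 (abs_arg_lt_pi_div_two_iff.2 (Or.inl hy))
  exact arg_mul hx hy0 ⟨by linarith [Real.pi_pos], by linarith [Real.pi_pos]⟩

lemma arg_div_add_arg_div {a b c : ℂ} (hab : 0 < (b / a).re) (hbc : 0 < (c / b).re) :
    arg (b / a) + arg (c / b) = arg (c / a) := by
  have hba : b / a ≠ 0 := by intro h; simp [h] at hab
  obtain ⟨hb, ha⟩ := div_ne_zero_iff.1 hba
  rw [← arg_mul_of_re_nonneg hba hab.le hbc]
  congr 1
  field_simp

lemma arg_I_mul {w : ℂ} (hw : w ≠ 0) (hre : 0 ≤ w.re) (him : w.im ≤ 0) :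
    arg (I * w) = arg w + π / 2 := by
  have h₁ := abs_le.1 (abs_arg_le_pi_div_two_iff.2 hre)
  have h₂ : arg w ≤ 0 := by
    rcases him.lt_or_eq with h | h
    · exact (arg_neg_iff.2 h).le
    · exact (arg_eq_zero_iff.2 ⟨hre, h⟩).le
  rw [arg_mul I_ne_zero hw, arg_I]
  · ring
  · rw [arg_I]; constructor <;> linarith [Real.pi_pos]

lemma re_div_pos_of_norm_sub_lt {z w : ℂ} (h : ‖w - z‖ < ‖z‖) : 0 < (w / z).re := by
  have hz : z ≠ 0 := norm_pos_iff.1 ((norm_nonneg _).trans_lt h)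
  have h₁ : ‖(w - z) / z‖ < 1 := by rwa [norm_div, div_lt_one (norm_pos_iff.2 hz)]
  have h₂ : w / z = 1 + (w - z) / z := by field_simp; ring
  rw [h₂, add_re, one_re]
  linarith [neg_abs_le ((w - z) / z).re, abs_re_le_norm ((w - z) / z)]

end Complex

lemma sum_arg_div_eq_sub {w : ℕ → ℂ} {n : ℕ} {c : ℂ} (hc : c ≠ 0)
    (hre : ∀ k ≤ n, 0 ≤ (c * w k).re) (hstep : ∀ k < n, 0 < (w (k + 1) / w k).re) :
    ∑ k ∈ range n, arg (w (k + 1) / w k) = arg (c * w n) - arg (c * w 0) := by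
  -- on the closed right half-plane `arg` has no jump, so small steps add up exactly
  rw [← Finset.sum_range_sub (fun k ↦ arg (c * w k))]
  refine Finset.sum_congr rfl fun k hk ↦ ?_
  have hk := Finset.mem_range.1 hk
  have hwk : w k ≠ 0 := by intro h; simpa [h] using hstep k hk
  have hsplit : c * w (k + 1) = c * w k * (w (k + 1) / w k) := by field_simp
  rw [hsplit, arg_mul_of_re_nonneg (mul_ne_zero hc hwk) (hre k hk.le) (hstep k hk)]
  ring

lemma sum_arg_div_add_arg_div_eq {a d : ℕ → ℂ} {n : ℕ}
    (ha : ∀ i < n, 0 < (a (i + 1) / a i).re) (hd : ∀ i < n, 0 < (d (i + 1) / d i).re)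
    (had : ∀ i ≤ n, 0 < (d i / a i).re) :
    ∑ i ∈ range n, arg (a (i + 1) / a i) + arg (d n / a n)
      = arg (d 0 / a 0) + ∑ i ∈ range n, arg (d (i + 1) / d i) := by
  have hcell : ∀ i ∈ range n, arg (a (i + 1) / a i) - arg (d (i + 1) / d i)
      = arg (d i / a i) - arg (d (i + 1) / a (i + 1)) := by
    intro i hi
    have hi := Finset.mem_range.1 hi
    -- `arg (d (i + 1) / a i)`, computed along either side of the cell
    have h₁ := arg_div_add_arg_div (ha i hi) (had (i + 1) hi)
    have h₂ := arg_div_add_arg_div (had i hi.le) (hd i hi)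
    linarith
  have htel := Finset.sum_range_sub' (fun i ↦ arg (d i / a i)) n
  rw [← Finset.sum_congr rfl hcell, Finset.sum_sub_distrib] at htel
  linarith

lemma sum_arg_div_grid_eq {z : ℕ → ℕ → ℂ} {A B : ℕ}
    (hH : ∀ i < A, ∀ j ≤ B, 0 < (z (i + 1) j / z i j).re)
    (hV : ∀ i ≤ A, ∀ j < B, 0 < (z i (j + 1) / z i j).re) :
    ∑ i ∈ range A, arg (z (i + 1) 0 / z i 0) + ∑ j ∈ range B, arg (z A (j + 1) / z A j)
      = ∑ j ∈ range B, arg (z 0 (j + 1) / z 0 j) + ∑ i ∈ range A, arg (z (i + 1) B / z i B) := by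
  set H : ℕ → ℝ := fun j ↦ ∑ i ∈ range A, arg (z (i + 1) j / z i j)
  have hrow : ∀ j ∈ range B, H (j + 1) - H j
      = arg (z A (j + 1) / z A j) - arg (z 0 (j + 1) / z 0 j) := by
    intro j hj
    have hj := Finset.mem_range.1 hj
    have := sum_arg_div_add_arg_div_eq (a := fun i ↦ z i j) (d := fun i ↦ z i (j + 1))
      (fun i hi ↦ hH i hi j hj.le) (fun i hi ↦ hH i hi (j + 1) hj) (fun i hi ↦ hV i hi j hj)
    simp only [H]
    linarith
  have htel := Finset.sum_range_sub H B
  rw [Finset.sum_congr rfl hrow, Finset.sum_sub_distrib] at htel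
  simp only [H] at htel
  linarith

theorem false_of_grid_boundary_signs {z : ℕ → ℕ → ℂ} {A B : ℕ}
    (hz : ∀ i ≤ A, ∀ j ≤ B, z i j ≠ 0)
    (hH : ∀ i < A, ∀ j ≤ B, 0 < (z (i + 1) j / z i j).re)
    (hV : ∀ i ≤ A, ∀ j < B, 0 < (z i (j + 1) / z i j).re)
    (hleft : ∀ j ≤ B, (z 0 j).re ≤ 0) (hright : ∀ j ≤ B, 0 ≤ (z A j).re)
    (hbot : ∀ i ≤ A, (z i 0).im ≤ 0) (htop : ∀ i ≤ A, 0 ≤ (z i B).im) : False := by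
  have hgrid := sum_arg_div_grid_eq hH hV
  have hbot' := sum_arg_div_eq_sub (w := fun i ↦ z i 0) I_ne_zero
    (fun i hi ↦ by simpa using hbot i hi) (fun i hi ↦ hH i hi 0 B.zero_le)
  have hright' := sum_arg_div_eq_sub (w := fun j ↦ z A j) one_ne_zero
    (fun j hj ↦ by simpa using hright j hj) (fun j hj ↦ hV A le_rfl j hj)
  have hleft' := sum_arg_div_eq_sub (w := fun j ↦ z 0 j) (neg_ne_zero.2 one_ne_zero)
    (fun j hj ↦ by simpa using hleft j hj) (fun j hj ↦ hV 0 A.zero_le j hj)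
  have htop' := sum_arg_div_eq_sub (w := fun i ↦ z i B) (neg_ne_zero.2 I_ne_zero)
    (fun i hi ↦ by simpa using htop i hi) (fun i hi ↦ hH i hi B le_rfl)
  simp only [one_mul] at hright'
  -- each corner of the square contributes a quarter turn
  have hP := arg_I_mul (w := I * z 0 0) (mul_ne_zero I_ne_zero (hz 0 A.zero_le 0 B.zero_le))
    (by simpa using hbot 0 A.zero_le) (by simpa using hleft 0 B.zero_le)
  have hQ := arg_I_mul (hz A le_rfl 0 B.zero_le) (hright 0 B.zero_le) (hbot A le_rfl)
  have hR := arg_I_mul (w := -I * z A B)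
    (mul_ne_zero (neg_ne_zero.2 I_ne_zero) (hz A le_rfl B le_rfl))
    (by simpa using htop A le_rfl) (by simpa using hright B le_rfl)
  have hS := arg_I_mul (w := -1 * z 0 B)
    (mul_ne_zero (neg_ne_zero.2 one_ne_zero) (hz 0 A.zero_le B le_rfl))
    (by simpa using hleft B le_rfl) (by simpa using htop 0 A.zero_le)
  rw [← mul_assoc, I_mul_I] at hP
  rw [← mul_assoc, mul_neg, I_mul_I, neg_neg, one_mul] at hR
  rw [← mul_assoc, mul_neg_one] at hS
  linarith [Real.pi_pos]

theorem exists_eq_zero_of_boundary_signs {F : unitInterval × unitInterval → ℂ} (hF : Continuous F)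
    (hleft : ∀ t, (F (0, t)).re ≤ 0) (hright : ∀ t, 0 ≤ (F (1, t)).re)
    (hbot : ∀ s, (F (s, 0)).im ≤ 0) (htop : ∀ s, 0 ≤ (F (s, 1)).im) : ∃ p, F p = 0 := by
  by_contra! hF0
  obtain ⟨p₀, -, hp₀⟩ := isCompact_univ.exists_isMinOn univ_nonempty hF.norm.continuousOn
  obtain ⟨δ, hδ, hFδ⟩ := Metric.uniformContinuous_iff.1
    (CompactSpace.uniformContinuous_of_continuous hF) ‖F p₀‖ (norm_pos_iff.2 (hF0 p₀))
  have hstep : ∀ p q, dist p q < δ → 0 < (F q / F p).re := fun p q hpq ↦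
    re_div_pos_of_norm_sub_lt <| calc
      ‖F q - F p‖ = dist (F p) (F q) := by rw [dist_comm, dist_eq_norm]
      _ < ‖F p₀‖ := hFδ hpq
      _ ≤ ‖F p‖ := hp₀ (mem_univ p)
  obtain ⟨n, hn⟩ := exists_nat_one_div_lt hδ
  set g : ℕ → unitInterval := fun i ↦ projIcc 0 1 zero_le_one (i / (n + 1))
  have hg : ∀ i, dist (g i) (g (i + 1)) < δ := by
    intro i
    refine lt_of_le_of_lt ?_ hn
    rw [Subtype.dist_eq, Real.dist_eq]
    refine (abs_projIcc_sub_projIcc _).trans_eq ?_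
    rw [abs_sub_comm, ← sub_div, Nat.cast_succ, add_sub_cancel_left, abs_of_pos (by positivity)]
  have hg0 : g 0 = 0 := by simp [g, projIcc_left]
  have hg1 : g (n + 1) = 1 := by
    simp [g, projIcc_right, div_self (n.cast_add_one_ne_zero (R := ℝ))]
  refine false_of_grid_boundary_signs (z := fun i j ↦ F (g i, g j)) (A := n + 1) (B := n + 1)
    (fun i _ j _ ↦ hF0 _) (fun i _ j _ ↦ hstep _ _ ?_) (fun i _ j _ ↦ hstep _ _ ?_)
    (fun j _ ↦ hg0 ▸ hleft _) (fun j _ ↦ hg1 ▸ hright _) (fun i _ ↦ hg0 ▸ hbot _)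
    (fun i _ ↦ hg1 ▸ htop _)
  · rw [Prod.dist_eq, dist_self]; exact max_lt (hg i) hδ
  · rw [Prod.dist_eq, dist_self]; exact max_lt hδ (hg j)

theorem Path.exists_eq_of_crossing {p₁ q₁ p₂ q₂ : ℝ × ℝ} (γ₁ : Path p₁ q₁) (γ₂ : Path p₂ q₂)
    (hleft : ∀ t, p₁.1 ≤ (γ₂ t).1) (hright : ∀ t, (γ₂ t).1 ≤ q₁.1)
    (hbot : ∀ s, q₂.2 ≤ (γ₁ s).2) (htop : ∀ s, (γ₁ s).2 ≤ p₂.2) :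
    ∃ s t, γ₁ s = γ₂ t := by
  obtain ⟨⟨s, t⟩, hst⟩ := exists_eq_zero_of_boundary_signs
    (F := fun p ↦ equivRealProdCLM.symm (γ₁ p.1 - γ₂ p.2)) (by fun_prop)
    (fun t ↦ by simpa using hleft t) (fun t ↦ by simpa using hright t)
    (fun s ↦ by simpa using htop s) (fun s ↦ by simpa using hbot s)
  exact ⟨s, t, sub_eq_zero.1 (equivRealProdCLM.symm.map_eq_zero_iff.1 hst)⟩

theorem JoinedIn.of_polygon {E : Type*} [AddCommGroup E] [Module ℝ E] [TopologicalSpace E]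
    [IsTopologicalAddGroup E] [ContinuousSMul ℝ E] {k : ℕ} {v : Fin (k + 1) → E} {S : Set E}
    (h₀ : v 0 ∈ S) (hseg : ∀ i : Fin k, segment ℝ (v i.castSucc) (v i.succ) ⊆ S) :
    JoinedIn S (v 0) (v (Fin.last k)) := by
  suffices ∀ m (hm : m ≤ k), JoinedIn S (v 0) (v ⟨m, by omega⟩) from this k le_rfl
  intro m hm
  induction m with
  | zero => exact JoinedIn.refl h₀
  | succ m ih => exact (ih (by omega)).trans (JoinedIn.of_segment_subset (hseg ⟨m, hm⟩))

def edgeUnion (G : Set ((ℝ × ℝ) × (ℝ × ℝ))) : Set (ℝ × ℝ) :=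
  ⋃ e ∈ G, segment ℝ e.1 e.2

lemma segment_subset_edgeUnion {G : Set ((ℝ × ℝ) × (ℝ × ℝ))} {a b : ℝ × ℝ}
    (h : (a, b) ∈ G ∨ (b, a) ∈ G) : segment ℝ a b ⊆ edgeUnion G := by
  rcases h with h | h
  · exact subset_biUnion_of_mem (u := fun e : (ℝ × ℝ) × (ℝ × ℝ) ↦ segment ℝ e.1 e.2) h
  · rw [segment_symm]
    exact subset_biUnion_of_mem (u := fun e : (ℝ × ℝ) × (ℝ × ℝ) ↦ segment ℝ e.1 e.2) h

lemma disjoint_edgeUnion {G G' : Set ((ℝ × ℝ) × (ℝ × ℝ))}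
    (h : ∀ e ∈ G, ∀ e' ∈ G', Disjoint (segment ℝ e.1 e.2) (segment ℝ e'.1 e'.2)) :
    Disjoint (edgeUnion G) (edgeUnion G') := by
  simp only [edgeUnion, disjoint_iUnion_left, disjoint_iUnion_right]
  exact fun e' he' e he ↦ h e he e' he'

lemma joinedIn_edgeUnion_inter_boxN {G : Set ((ℝ × ℝ) × (ℝ × ℝ))} {N : ℝ} {k : ℕ}
    {v : Fin (k + 1) → ℝ × ℝ} (hk : 0 < k)
    (hG : ∀ i : Fin k, (v i.castSucc, v i.succ) ∈ G ∨ (v i.succ, v i.castSucc) ∈ G)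
    (hbox : ∀ i : Fin k, segment ℝ (v i.castSucc) (v i.succ) ⊆ boxN N) :
    JoinedIn (edgeUnion G ∩ boxN N) (v 0) (v (Fin.last k)) := by
  have hseg : ∀ i : Fin k, segment ℝ (v i.castSucc) (v i.succ) ⊆ edgeUnion G ∩ boxN N :=
    fun i ↦ subset_inter (segment_subset_edgeUnion (hG i)) (hbox i)
  exact JoinedIn.of_polygon (hseg ⟨0, hk⟩ (left_mem_segment ℝ _ _)) hseg

lemma pos_of_apply_zero_ne_apply_last {α : Type*} {k : ℕ} {v : Fin (k + 1) → α}
    (h : v 0 ≠ v (Fin.last k)) : 0 < k :=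
  Nat.pos_of_ne_zero fun hk ↦ h (by subst hk; rfl)

lemma HasLRCrossing.exists_joinedIn {G : Set ((ℝ × ℝ) × (ℝ × ℝ))} {N : ℝ} (hN : 0 < N)
    (h : HasLRCrossing G N) :
    ∃ p q : ℝ × ℝ, p.1 = -(N / 2) ∧ q.1 = N / 2 ∧ JoinedIn (edgeUnion G ∩ boxN N) p q := by
  obtain ⟨k, v, hG, hbox, h₀, hlast, -, -⟩ := h
  have hk : 0 < k := pos_of_apply_zero_ne_apply_last (v := v) fun h ↦ by
    rw [h, hlast] at h₀; linarith
  exact ⟨_, _, h₀, hlast, joinedIn_edgeUnion_inter_boxN hk hG hbox⟩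

lemma HasTBCrossing.exists_joinedIn {G : Set ((ℝ × ℝ) × (ℝ × ℝ))} {N : ℝ} (hN : 0 < N)
    (h : HasTBCrossing G N) :
    ∃ p q : ℝ × ℝ, p.2 = N / 2 ∧ q.2 = -(N / 2) ∧ JoinedIn (edgeUnion G ∩ boxN N) p q := by
  obtain ⟨k, v, hG, hbox, h₀, hlast, -, -⟩ := h
  have hk : 0 < k := pos_of_apply_zero_ne_apply_last (v := v) fun h ↦ by
    rw [h, hlast] at h₀; linarith
  exact ⟨_, _, h₀, hlast, joinedIn_edgeUnion_inter_boxN hk hG hbox⟩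

/-- Blocking lemma: if no edge of `G_L` meets any edge of `G_E`, and `G_E` has
both a left-right and a top-bottom crossing of `B_N`, then `G_L` cannot have both
crossings of `B_N`. -/
theorem stmt_19 (N : ℝ) (hN : 0 < N) (Geav Gleg : Set ((ℝ × ℝ) × (ℝ × ℝ)))
    (hcross : ∀ eL ∈ Gleg, ∀ eE ∈ Geav,
      Disjoint (segment ℝ eL.1 eL.2) (segment ℝ eE.1 eE.2))
    (hE : HasLRCrossing Geav N ∧ HasTBCrossing Geav N) :
    ¬ (HasLRCrossing Gleg N ∧ HasTBCrossing Gleg N) := by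
  rintro ⟨-, hTB⟩
  obtain ⟨pE, qE, hpE, hqE, hjE⟩ := hE.1.exists_joinedIn hN
  obtain ⟨pL, qL, hpL, hqL, hjL⟩ := hTB.exists_joinedIn hN
  have hγE := hjE.somePath_mem
  have hγL := hjL.somePath_mem
  obtain ⟨s, t, hst⟩ := Path.exists_eq_of_crossing hjE.somePath hjL.somePath
    (fun t ↦ hpE ▸ (hγL t).2.1.1) (fun t ↦ hqE ▸ (hγL t).2.1.2)
    (fun s ↦ hqL ▸ (hγE s).2.2.1) (fun s ↦ hpL ▸ (hγE s).2.2.2)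
  exact (disjoint_edgeUnion hcross).ne_of_mem (hγL t).1 (hγE s).1 hst.symm
end
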